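/- Weak duality for GDD with constraints: Let N ≥ 1, let X_1,…,X_N be nonempty subsets of a set α with ⋂_{i=1}^N X_i nonempty, and let f : α → ℝ. If g_i : α → ℝ, i = 1,…,N, satisfy ∑_{i=1}^N g_i(x) = 0 for all x ∈ ⋃_{i=1}^N X_i and each set {f(x) + g_i(x) : x ∈ X_i} is bounded below, then (1/N) ∑_{i=1}^N inf_{x ∈ X_i} (f(x) + g_i(x)) ≤ inf { f(x) : x ∈ ⋂_{i=1}^N X_i }. -/

import Mathlib

open Finset

section WeakDuality

variable {α ι : Type*} [Fintype ι] (Xs : ι → Set α) (f : α → ℝ) (g : ι → α → ℝ)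

lemma sum_sInf_image_add_le_card_mul {x : α} (hx : ∀ i, x ∈ Xs i) (hgx : ∑ i, g i x = 0)
    (hbdd : ∀ i, BddBelow ((fun x => f x + g i x) '' Xs i)) :
    ∑ i, sInf ((fun x => f x + g i x) '' Xs i) ≤ Fintype.card ι * f x :=
  calc ∑ i, sInf ((fun x => f x + g i x) '' Xs i)
      ≤ ∑ i, (f x + g i x) := sum_le_sum fun i _ => csInf_le (hbdd i) ⟨x, hx i, rfl⟩
    _ = Fintype.card ι * f x := by
      rw [sum_add_distrib, hgx, add_zero, sum_const, card_univ, nsmul_eq_mul]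

theorem inv_card_mul_sum_sInf_image_add_le_sInf_image_iInter [Nonempty ι]
    (hint : (⋂ i, Xs i).Nonempty) (hg : ∀ x ∈ ⋂ i, Xs i, ∑ i, g i x = 0)
    (hbdd : ∀ i, BddBelow ((fun x => f x + g i x) '' Xs i)) :
    (Fintype.card ι : ℝ)⁻¹ * ∑ i, sInf ((fun x => f x + g i x) '' Xs i) ≤
      sInf (f '' ⋂ i, Xs i) := by
  refine le_csInf (hint.image f) ?_
  rintro _ ⟨x, hx, rfl⟩
  have hcard : (0 : ℝ) < Fintype.card ι := by exact_mod_cast Fintype.card_pos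
  rw [inv_mul_le_iff₀ hcard]
  exact sum_sInf_image_add_le_card_mul Xs f g (Set.mem_iInter.1 hx) (hg x hx) hbdd

end WeakDuality

theorem cgdd_weak_duality_general {α : Type*} (N : ℕ) (hN : 1 ≤ N)
    (Xs : Fin N → Set α)
    (hint : (⋂ i, Xs i).Nonempty)
    (f : α → ℝ) (g : Fin N → α → ℝ)
    (hg : ∀ x ∈ ⋃ i, Xs i, ∑ i, g i x = 0)
    (hbdd : ∀ i, BddBelow ((fun x => f x + g i x) '' Xs i)) :
    (1 / (N : ℝ)) * ∑ i, sInf ((fun x => f x + g i x) '' Xs i) ≤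
      sInf (f '' ⋂ i, Xs i) := by
  have : Nonempty (Fin N) := ⟨⟨0, hN⟩⟩
  simpa using inv_card_mul_sum_sInf_image_add_le_sInf_image_iInter Xs f g hint
    (fun x hx => hg x (Set.iInter_subset_iUnion hx)) hbdd

/-- Weak duality for GDD with constraints. -/
theorem cgdd_weak_duality {α : Type*} (N : ℕ) (hN : 1 ≤ N)
    (Xs : Fin N → Set α) (hXsNe : ∀ i, (Xs i).Nonempty)
    (hint : (⋂ i, Xs i).Nonempty)
    (f : α → ℝ) (g : Fin N → α → ℝ)
    (hg : ∀ x ∈ ⋃ i, Xs i, ∑ i, g i x = 0)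
    (hbdd : ∀ i, BddBelow ((fun x => f x + g i x) '' Xs i)) :
    (1 / (N : ℝ)) * ∑ i, sInf ((fun x => f x + g i x) '' Xs i) ≤
      sInf (f '' ⋂ i, Xs i) :=
  cgdd_weak_duality_general N hN Xs hint f g hg hbdd
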